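/- (S_finish, S_2^=, [0,1], [0, ∞))↓ holds: from every configuration in which robot r is in state S_finish with observed distance in [0,1] and robot s satisfies condition S_2^= with any observed distance, every fair SSynch execution of Algorithm 1 solves rendezvous. -/

import Mathlib

/-- Points in the plane. -/
abbrev Pt := EuclideanSpace ℝ (Fin 2)

/-- Observed directions. -/
inductive Dir | left | right
deriving DecidableEq

/-- The six internal states of Algorithm 1. -/
inductive St | start | s1 | s2 (d : Dir) | s3 | finish
deriving DecidableEq

/-- A local coordinate frame: an orthogonal linear map of the plane. -/
abbrev Frame := Pt ≃ₗᵢ[ℝ] Pt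

/-- Observed direction of a local vector `v`: `right` if its first coordinate is
positive, or is zero with positive second coordinate; `left` otherwise. -/
noncomputable def obsDir (v : Pt) : Dir :=
  if 0 < v 0 ∨ (v 0 = 0 ∧ 0 < v 1) then Dir.right else Dir.left

/-- Local vector observed by a robot with unit distance `u` and frame `A`,
located at `p`, looking at the other robot at `q`. -/
noncomputable def obsVec (u : ℝ) (A : Frame) (p q : Pt) : Pt := u⁻¹ • (A (q - p))

/-- Observed distance. -/
noncomputable def obsDist (u : ℝ) (p q : Pt) : ℝ := ‖q - p‖ / u

/-- Algorithm 1: given the current state, the observed distance `d` and the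
observed direction `dir`, returns the new state and the coefficient `μ` such
that the (global) destination is `p + μ • (q - p)` (i.e. local destination `μ • v`). -/
noncomputable def algo1 (s : St) (d : ℝ) (dir : Dir) : St × ℝ :=
  if d = 0 then (s, 0)
  else match s with
  | .start => if d < 1 then (.s1, 1 - 1/d) else (.s2 dir, 1)
  | .s1 => if d ≤ 1 then (.finish, 0) else (.s2 dir, 1)
  | .s2 d' =>
      if dir = d' then (.finish, 1)
      else if d < 1/2 then (.finish, 0)
      else if d < 1 then (.s3, 1/2)
      else (.s2 d', 1/2)
  | .s3 => if d < 1/4 then (.finish, 0) else (.finish, 1)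
  | .finish => if d ≤ 1 then (.finish, 0) else (.finish, 1)

/-- A configuration: positions and internal states of the two robots
(robot `r` is `false`, robot `s` is `true`). -/
structure Config where
  pos : Bool → Pt
  st : Bool → St

/-- Result (new position, new state) of one activation of robot `i`. -/
noncomputable def stepRobot (u : Bool → ℝ) (A : Bool → Frame) (c : Config) (i : Bool) :
    Pt × St :=
  let p := c.pos i
  let q := c.pos (!i)
  let d := obsDist (u i) p q
  let dir := obsDir (obsVec (u i) (A i) p q)
  let r := algo1 (c.st i) d dir
  (p + r.2 • (q - p), r.1)

/-- One synchronous round in which exactly the robots `i` with `act i = true`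
are activated; both activated robots observe the same (pre-round) configuration,
and rigidly reach their computed destinations. -/
noncomputable def stepConfig (u : Bool → ℝ) (A : Bool → Frame) (act : Bool → Bool)
    (c : Config) : Config where
  pos i := if act i then (stepRobot u A c i).1 else c.pos i
  st i := if act i then (stepRobot u A c i).2 else c.st i

/-- The configuration after `n` rounds of the SSynch execution of Algorithm 1
under schedule `sched`, starting from `c0`. -/
noncomputable def run (u : Bool → ℝ) (A : Bool → Frame) (sched : ℕ → Bool → Bool)
    (c0 : Config) : ℕ → Config
  | 0 => c0
  | n + 1 => stepConfig u A (sched n) (run u A sched c0 n)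

/-- A legal fair SSynch schedule: at every round a nonempty set of robots is
activated, and each robot is activated infinitely often. -/
def FairSched (sched : ℕ → Bool → Bool) : Prop :=
  (∀ n, sched n false = true ∨ sched n true = true) ∧
  (∀ i n, ∃ m, n ≤ m ∧ sched m i = true)

/-- Rendezvous is solved: from some round on, the two robots occupy the same
point and never move again. -/
noncomputable def Solves (u : Bool → ℝ) (A : Bool → Frame) (sched : ℕ → Bool → Bool)
    (c0 : Config) : Prop :=
  ∃ N : ℕ, ∀ n, N ≤ n → ∀ i, (run u A sched c0 n).pos i = (run u A sched c0 N).pos false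

/-- Conditions on a robot: one of the six internal states, or `S₂⁼` / `S₂≠`. -/
inductive Cond | start | s1 | s2 (d : Dir) | s2eq | s2ne | s3 | finish

/-- A robot in state `s` whose currently observed direction is `dir`
satisfies the condition. -/
def Cond.sat : Cond → St → Dir → Prop
  | .start, s, _ => s = .start
  | .s1, s, _ => s = .s1
  | .s2 d', s, _ => s = .s2 d'
  | .s2eq, s, dir => s = .s2 dir
  | .s2ne, s, dir => ∃ d', s = St.s2 d' ∧ d' ≠ dir
  | .s3, s, _ => s = .s3
  | .finish, s, _ => s = .finish

/-- `(S_a, S_b, I_a, I_b)↓` : for every choice of the units and frames, from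
every configuration in which robot `r` satisfies condition `Ca` with observed
distance in `Ia` and robot `s` satisfies condition `Cb` with observed distance
in `Ib`, every fair SSynch execution of Algorithm 1 solves Rendezvous. -/
noncomputable def Down (Ca Cb : Cond) (Ia Ib : Set ℝ) : Prop :=
  ∀ (u : Bool → ℝ) (A : Bool → Frame), (∀ i, 0 < u i) →
    ∀ c0 : Config,
      Ca.sat (c0.st false)
        (obsDir (obsVec (u false) (A false) (c0.pos false) (c0.pos true))) →
      obsDist (u false) (c0.pos false) (c0.pos true) ∈ Ia →
      Cb.sat (c0.st true)
        (obsDir (obsVec (u true) (A true) (c0.pos true) (c0.pos false))) →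
      obsDist (u true) (c0.pos true) (c0.pos false) ∈ Ib →
      ∀ sched : ℕ → Bool → Bool, FairSched sched → Solves u A sched c0

/-!
Robot `r`, in state `S_finish` at observed distance at most `1`, stays put as long as `s` does.
At its first activation `s` sees `r` in the direction recorded in its state `S_2`, so it moves
onto `r`; from a gathered configuration no robot ever moves again.
-/

section Execution

variable (u : Bool → ℝ) (A : Bool → Frame)

lemma stepRobot_of_pos_eq (c : Config) (i : Bool) (h : c.pos i = c.pos (!i)) :
    stepRobot u A c i = (c.pos i, c.st i) := by
  simp [stepRobot, obsDist, ← h, algo1]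

lemma stepRobot_of_finish (c : Config) (i : Bool) (hst : c.st i = .finish)
    (hd : obsDist (u i) (c.pos i) (c.pos (!i)) ≤ 1) :
    stepRobot u A c i = (c.pos i, .finish) := by
  simp only [stepRobot, hst, algo1]
  split_ifs <;> simp_all

lemma stepRobot_of_s2_obsDir (c : Config) (i : Bool) (hu : u i ≠ 0)
    (hne : c.pos i ≠ c.pos (!i))
    (hst : c.st i = .s2 (obsDir (obsVec (u i) (A i) (c.pos i) (c.pos (!i))))) :
    stepRobot u A c i = (c.pos (!i), .finish) := by
  have hd : obsDist (u i) (c.pos i) (c.pos (!i)) ≠ 0 :=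
    div_ne_zero (norm_ne_zero_iff.mpr (sub_ne_zero.mpr hne.symm)) hu
  simp [stepRobot, hst, algo1, hd]

lemma stepConfig_of_pos_eq (act : Bool → Bool) (c : Config) (h : c.pos false = c.pos true) :
    stepConfig u A act c = c := by
  have hi : ∀ i, c.pos i = c.pos (!i) := by intro i; cases i <;> simp [h]
  change Config.mk _ _ = Config.mk c.pos c.st
  congr 1 <;> funext i <;> split_ifs <;> simp [stepRobot_of_pos_eq u A c i (hi i)]

lemma stepConfig_of_finish_of_not_act (act : Bool → Bool) (c : Config) (hact : act true = false)
    (hst : c.st false = .finish) (hd : obsDist (u false) (c.pos false) (c.pos true) ≤ 1) :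
    stepConfig u A act c = c := by
  have hr := stepRobot_of_finish u A c false hst hd
  change Config.mk _ _ = Config.mk c.pos c.st
  congr 1 <;> funext i <;> cases i <;> split_ifs <;> simp_all

lemma stepConfig_pos_eq_of_s2_obsDir (act : Bool → Bool) (c : Config) (hact : act true = true)
    (hu : u true ≠ 0) (hne : c.pos true ≠ c.pos false)
    (hs : c.st true = .s2 (obsDir (obsVec (u true) (A true) (c.pos true) (c.pos false))))
    (hst : c.st false = .finish) (hd : obsDist (u false) (c.pos false) (c.pos true) ≤ 1) :
    (stepConfig u A act c).pos false = (stepConfig u A act c).pos true := by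
  have hr := stepRobot_of_finish u A c false hst hd
  have hs' := stepRobot_of_s2_obsDir u A c true hu hne hs
  simp only [stepConfig, hact, hr, hs', Bool.not_true]
  split_ifs <;> rfl

variable (sched : ℕ → Bool → Bool) (c0 : Config)

lemma run_add_of_pos_eq (N : ℕ)
    (h : (run u A sched c0 N).pos false = (run u A sched c0 N).pos true) (k : ℕ) :
    run u A sched c0 (N + k) = run u A sched c0 N := by
  induction k with
  | zero => rfl
  | succ k ih =>
    change stepConfig u A (sched (N + k)) (run u A sched c0 (N + k)) = _
    rw [ih, stepConfig_of_pos_eq u A _ _ h]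

lemma solves_of_pos_eq (N : ℕ)
    (h : (run u A sched c0 N).pos false = (run u A sched c0 N).pos true) :
    Solves u A sched c0 := by
  refine ⟨N, fun n hn i => ?_⟩
  obtain ⟨k, rfl⟩ := Nat.exists_eq_add_of_le hn
  rw [run_add_of_pos_eq u A sched c0 N h k]
  cases i
  · rfl
  · exact h.symm

lemma run_eq_of_finish_of_not_act (hst : c0.st false = .finish)
    (hd : obsDist (u false) (c0.pos false) (c0.pos true) ≤ 1) (n : ℕ)
    (hidle : ∀ k < n, sched k true = false) :
    run u A sched c0 n = c0 := by
  induction n with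
  | zero => rfl
  | succ n ih =>
    change stepConfig u A (sched n) (run u A sched c0 n) = c0
    rw [ih fun k hk => hidle k (Nat.lt_succ_of_lt hk),
      stepConfig_of_finish_of_not_act u A _ c0 (hidle n n.lt_succ_self) hst hd]

end Execution

/-- Lemma 5: `(S_finish, S_2^=, [0,1], [0, ∞))↓`. -/
theorem lemma_l9 :
    Down Cond.finish Cond.s2eq (Set.Icc (0 : ℝ) 1) (Set.Ici (0 : ℝ)) := by
  intro u A hu c0 hr hdr hs _ sched hsched
  by_cases hgathered : c0.pos false = c0.pos true
  · exact solves_of_pos_eq u A sched c0 0 hgathered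
  classical
  obtain ⟨m₀, -, hm₀⟩ := hsched.2 true 0
  have hact : ∃ m, sched m true = true := ⟨m₀, hm₀⟩
  have hidle : run u A sched c0 (Nat.find hact) = c0 :=
    run_eq_of_finish_of_not_act u A sched c0 hr hdr.2 _
      fun k hk => by simpa using Nat.find_min hact hk
  refine solves_of_pos_eq u A sched c0 (Nat.find hact + 1) ?_
  change (stepConfig u A _ (run u A sched c0 _)).pos false = (stepConfig u A _ _).pos true
  rw [hidle]
  exact stepConfig_pos_eq_of_s2_obsDir u A _ c0 (Nat.find_spec hact) (hu true).ne'
    (Ne.symm hgathered) hs hr hdr.2
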